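/- Suppose the score event max_{1≤i≤p} ‖(1/n) X_iᵀ ε^{(i)}‖_∞ ≤ λ/2 holds, where ‖·‖_∞ is the maximum absolute coordinate. Let (b̂_1,…,b̂_p) be any global minimizer of the pooled multi-task Lasso objective G, set Δ_i = b̂_i − b*_i, and let J = { i ∈ {1,…,p} : b*_i ≠ 0 } be the active task set. Then the average prediction error satisfies (1/p) Σ_{i=1}^p (1/n)‖X_i Δ_i‖₂² ≤ (2λ/p) Σ_{i∈J} min( ‖b*_i‖₁ , ‖Δ_i‖₁ ). -/
import Mathlib


open Finset Matrix

/-- Euclidean (ℓ2) norm of a real vector. -/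
noncomputable def l2 {m : ℕ} (v : Fin m → ℝ) : ℝ := Real.sqrt (∑ k, (v k) ^ 2)

/-- ℓ1 norm of a real vector. -/
noncomputable def l1 {m : ℕ} (v : Fin m → ℝ) : ℝ := ∑ j, |v j|

/-- The pooled multi-task Lasso objective
`G(b₁,…,b_p) = (1/p) Σᵢ [ (1/n)‖yᵢ − Xᵢbᵢ‖₂² + λ‖bᵢ‖₁ ]`. -/
noncomputable def Gobj {n p : ℕ} (X : Fin p → Matrix (Fin n) (Fin p) ℝ)
    (y : Fin p → Fin n → ℝ) (lam : ℝ) (b : Fin p → Fin p → ℝ) : ℝ :=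
  (1 / (p : ℝ)) * ∑ i, ((1 / (n : ℝ)) * (l2 (y i - (X i).mulVec (b i))) ^ 2
      + lam * l1 (b i))

lemma l2_sq {m : ℕ} (v : Fin m → ℝ) : (l2 v) ^ 2 = ∑ k, (v k) ^ 2 := by
  rw [l2, Real.sq_sqrt]; positivity

open Classical in
/-- Prediction error bound for the pooled multi-task Lasso. -/
theorem stmt_4 {n p : ℕ} (hn : 1 ≤ n)
    (X : Fin p → Matrix (Fin n) (Fin p) ℝ)
    (bstar : Fin p → Fin p → ℝ) (ε : Fin p → Fin n → ℝ)
    (y : Fin p → Fin n → ℝ)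
    (hy : ∀ i, y i = (X i).mulVec (bstar i) + ε i)
    (lam : ℝ) (hlam : 0 < lam)
    (hscore : ∀ i : Fin p, ∀ j : Fin p,
      |(1 / (n : ℝ)) * ∑ k, (X i) k j * ε i k| ≤ lam / 2)
    (bhat : Fin p → Fin p → ℝ)
    (hmin : ∀ b : Fin p → Fin p → ℝ, Gobj X y lam bhat ≤ Gobj X y lam b) :
    (1 / (p : ℝ)) * ∑ i, (1 / (n : ℝ)) * (l2 ((X i).mulVec (bhat i - bstar i))) ^ 2
      ≤ (2 * lam / (p : ℝ)) *
          ∑ i ∈ Finset.univ.filter (fun i => bstar i ≠ 0),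
            min (l1 (bstar i)) (l1 (bhat i - bstar i)) := by
  rcases Nat.eq_zero_or_pos p with hp | hp
  · subst hp
    simp
  have hn' : (0:ℝ) < (n:ℝ) := by exact_mod_cast hn
  have hp' : (0:ℝ) < (p:ℝ) := by exact_mod_cast hp
  set Δ : Fin p → Fin p → ℝ := fun i => bhat i - bstar i with hΔ
  -- residual identity
  have hresid : ∀ i, y i - (X i).mulVec (bhat i) = ε i - (X i).mulVec (Δ i) := by
    intro i
    have : (X i).mulVec (Δ i) = (X i).mulVec (bhat i) - (X i).mulVec (bstar i) := by
      simp [hΔ, Matrix.mulVec_sub]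
    rw [hy i, this]
    abel
  have hres0 : ∀ i, y i - (X i).mulVec (bstar i) = ε i := by
    intro i; rw [hy i]; abel
  -- cross term
  set cross : Fin p → ℝ := fun i => ∑ k, ε i k * ((X i).mulVec (Δ i)) k with hcross
  have hexp : ∀ i, (l2 (y i - (X i).mulVec (bhat i)))^2
      = (l2 (ε i))^2 - 2 * cross i + (l2 ((X i).mulVec (Δ i)))^2 := by
    intro i
    rw [hresid i, l2_sq, l2_sq, l2_sq, hcross]
    rw [Finset.mul_sum, ← Finset.sum_sub_distrib, ← Finset.sum_add_distrib]
    apply Finset.sum_congr rfl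
    intro k _
    simp only [Pi.sub_apply]
    ring
  -- basic inequality: total sums
  have hG := hmin bstar
  rw [Gobj, Gobj] at hG
  have hsum : ∑ i, ((1 / (n : ℝ)) * (l2 (y i - (X i).mulVec (bhat i))) ^ 2
      + lam * l1 (bhat i))
      ≤ ∑ i, ((1 / (n : ℝ)) * (l2 (y i - (X i).mulVec (bstar i))) ^ 2
      + lam * l1 (bstar i)) :=
    le_of_mul_le_mul_left hG (by positivity)
  -- rewrite bstar residual as ε
  have hsum2 : ∑ i, ((1 / (n : ℝ)) * (l2 (ε i)) ^ 2 - 2 * ((1 / (n : ℝ)) * cross i)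
        + (1 / (n : ℝ)) * (l2 ((X i).mulVec (Δ i))) ^ 2 + lam * l1 (bhat i))
      ≤ ∑ i, ((1 / (n : ℝ)) * (l2 (ε i)) ^ 2 + lam * l1 (bstar i)) := by
    refine le_trans (le_of_eq ?_) (le_trans hsum (le_of_eq ?_))
    · apply Finset.sum_congr rfl
      intro i _
      rw [hexp i]; ring
    · apply Finset.sum_congr rfl
      intro i _
      rw [hres0 i]
  -- subtract the ε terms
  have h2 : ∑ i, ((1 / (n : ℝ)) * (l2 ((X i).mulVec (Δ i))) ^ 2)
      ≤ ∑ i, (2 * ((1 / (n : ℝ)) * cross i) + lam * (l1 (bstar i) - l1 (bhat i))) := by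
    have := hsum2
    rw [← sub_nonneg, ← Finset.sum_sub_distrib] at this ⊢
    · refine le_of_le_of_eq this (Finset.sum_congr rfl ?_)
      intro i _; ring
  -- bound the cross term by the score event
  have hcrossbound : ∀ i, 2 * ((1 / (n : ℝ)) * cross i) ≤ lam * l1 (Δ i) := by
    intro i
    have hrw : (1 / (n : ℝ)) * cross i
        = ∑ j, Δ i j * ((1 / (n : ℝ)) * ∑ k, (X i) k j * ε i k) := by
      rw [hcross]
      simp only [Matrix.mulVec, dotProduct, Finset.mul_sum]
      rw [Finset.sum_comm]
      apply Finset.sum_congr rfl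
      intro j _
      apply Finset.sum_congr rfl
      intro k _
      ring
    have habs : |(1 / (n : ℝ)) * cross i| ≤ (lam / 2) * l1 (Δ i) := by
      rw [hrw]
      calc |∑ j, Δ i j * ((1 / (n : ℝ)) * ∑ k, (X i) k j * ε i k)|
          ≤ ∑ j, |Δ i j * ((1 / (n : ℝ)) * ∑ k, (X i) k j * ε i k)| :=
            Finset.abs_sum_le_sum_abs _ _
        _ ≤ ∑ j, |Δ i j| * (lam / 2) := by
            apply Finset.sum_le_sum
            intro j _
            rw [abs_mul]
            exact mul_le_mul_of_nonneg_left (hscore i j) (abs_nonneg _)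
        _ = (lam / 2) * l1 (Δ i) := by rw [l1, ← Finset.sum_mul]; ring
    have := (abs_le.mp habs).2
    linarith
  -- per-task bound term
  set t : Fin p → ℝ := fun i => lam * l1 (Δ i) + lam * (l1 (bstar i) - l1 (bhat i)) with ht
  have h3 : ∑ i, ((1 / (n : ℝ)) * (l2 ((X i).mulVec (Δ i))) ^ 2) ≤ ∑ i, t i := by
    refine le_trans h2 (Finset.sum_le_sum ?_)
    intro i _
    have := hcrossbound i
    simp only [ht]
    linarith
  -- l1 triangle facts
  have hl1_tri : ∀ i, l1 (Δ i) ≤ l1 (bhat i) + l1 (bstar i) := by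
    intro i
    rw [l1, l1, l1, ← Finset.sum_add_distrib]
    apply Finset.sum_le_sum
    intro j _
    simp only [hΔ, Pi.sub_apply]
    exact abs_sub _ _
  have hl1_rev : ∀ i, l1 (bstar i) - l1 (bhat i) ≤ l1 (Δ i) := by
    intro i
    rw [l1, l1, l1, sub_le_iff_le_add, ← Finset.sum_add_distrib]
    apply Finset.sum_le_sum
    intro j _
    simp only [hΔ, Pi.sub_apply]
    have := abs_sub_abs_le_abs_sub (bstar i j) (bhat i j)
    have h2 := abs_sub_comm (bstar i j) (bhat i j)
    linarith [abs_sub_abs_le_abs_sub (bstar i j) (bhat i j)]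
  have htmin : ∀ i, t i ≤ 2 * lam * min (l1 (bstar i)) (l1 (Δ i)) := by
    intro i
    rcases le_total (l1 (bstar i)) (l1 (Δ i)) with h | h
    · rw [min_eq_left h]
      have := hl1_tri i
      simp only [ht]
      nlinarith
    · rw [min_eq_right h]
      have := hl1_rev i
      simp only [ht]
      nlinarith
  have htzero : ∀ i, bstar i = 0 → t i = 0 := by
    intro i h0
    have hΔeq : Δ i = bhat i := by simp [hΔ, h0]
    have h1 : l1 (bstar i) = 0 := by simp [l1, h0]
    simp [ht, hΔeq, h1]
  -- sum over the active set
  have h4 : ∑ i, t i ≤ ∑ i ∈ Finset.univ.filter (fun i => bstar i ≠ 0),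
      (2 * lam * min (l1 (bstar i)) (l1 (Δ i))) := by
    rw [← Finset.sum_filter_add_sum_filter_not Finset.univ (fun i => bstar i ≠ 0) t]
    have hz : ∑ i ∈ Finset.univ.filter (fun i => ¬ bstar i ≠ 0), t i = 0 := by
      apply Finset.sum_eq_zero
      intro i hi
      simp only [Finset.mem_filter, not_not] at hi
      exact htzero i hi.2
    rw [hz, add_zero]
    exact Finset.sum_le_sum (fun i _ => htmin i)
  have h5 : ∑ i, ((1 / (n : ℝ)) * (l2 ((X i).mulVec (Δ i))) ^ 2)
      ≤ 2 * lam * ∑ i ∈ Finset.univ.filter (fun i => bstar i ≠ 0),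
          min (l1 (bstar i)) (l1 (Δ i)) := by
    rw [Finset.mul_sum]
    exact le_trans h3 h4
  calc (1 / (p : ℝ)) * ∑ i, (1 / (n : ℝ)) * (l2 ((X i).mulVec (bhat i - bstar i))) ^ 2
      ≤ (1 / (p : ℝ)) * (2 * lam * ∑ i ∈ Finset.univ.filter (fun i => bstar i ≠ 0),
          min (l1 (bstar i)) (l1 (Δ i))) := by
        apply mul_le_mul_of_nonneg_left h5 (by positivity)
    _ = (2 * lam / (p : ℝ)) * ∑ i ∈ Finset.univ.filter (fun i => bstar i ≠ 0),
          min (l1 (bstar i)) (l1 (bhat i - bstar i)) := by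
        simp only [hΔ]; ring
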